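/- Let D be an acyclic digraph and let x ≠ y be vertices with N⁻_D(x) = N⁻_D(y). Then: (i) for every vertex v, N⁻_{D*v}(x) = N⁻_{D*v}(y); (ii) for all distinct vertices u, w with N⁻_D(u) = N⁻_D(w), N⁻_{D▷uw}(x) = N⁻_{D▷uw}(y). Consequently, local complementations and slides preserve the sibling relation on the vertex set, and sibling classes are invariant under Bott equivalence. -/

import Mathlib

/-!
Both operations change the arcs into a vertex `z` only by a term built from the arcs into `z`
(`R v z` for a local complementation at `v`, `R u z` for a slide from `u`), so vertices with
equal in-neighbourhoods keep equal in-neighbourhoods; induction then covers Bott equivalence.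
-/

/-- Local complementation at `v`: arc set `A(D) Δ (N⁻_D(v) × N⁺_D(v))`. -/
def localComp {V : Type*} (R : V → V → Prop) (v : V) : V → V → Prop :=
  fun x y => Xor' (R x y) (R x v ∧ R v y)

/-- The slide on `uw`: arc set `A(D) Δ {(w,z) : z ∈ N⁺_D(u)}`. -/
def slideRel {V : Type*} (R : V → V → Prop) (u w : V) : V → V → Prop :=
  fun x y => Xor' (R x y) (x = w ∧ R u y)

/-- A digraph is acyclic if it has no directed cycle. -/
def AcyclicRel {V : Type*} (R : V → V → Prop) : Prop :=
  ∀ v : V, ¬ Relation.TransGen R v v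

/-- One graph operation: a local complementation or a legal slide. -/
inductive GStep {V : Type*} : (V → V → Prop) → (V → V → Prop) → Prop
  | lc (R : V → V → Prop) (v : V) : GStep R (localComp R v)
  | sl (R : V → V → Prop) (u v : V) (h : u ≠ v) (hN : ∀ w, R w u ↔ R w v) :
      GStep R (slideRel R u v)

section Siblings

variable {V : Type*} {R : V → V → Prop} {x y : V}

theorem localComp_iff_of_siblings (hN : ∀ w, R w x ↔ R w y) (v w : V) :
    localComp R v w x ↔ localComp R v w y := by
  simp only [localComp, hN w, hN v]

theorem slideRel_iff_of_siblings (hN : ∀ w, R w x ↔ R w y) (u v w : V) :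
    slideRel R u v w x ↔ slideRel R u v w y := by
  simp only [slideRel, hN w, hN u]

theorem GStep.iff_of_siblings {R' : V → V → Prop} (h : GStep R R')
    (hN : ∀ w, R w x ↔ R w y) (w : V) : R' w x ↔ R' w y := by
  cases h with
  | lc v => exact localComp_iff_of_siblings hN v w
  | sl u v _ _ => exact slideRel_iff_of_siblings hN u v w

theorem iff_of_siblings_of_reflTransGen_gStep {R' : V → V → Prop}
    (h : Relation.ReflTransGen GStep R R') (hN : ∀ w, R w x ↔ R w y) (w : V) :
    R' w x ↔ R' w y := by
  induction h generalizing w with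
  | refl => exact hN w
  | tail _ hstep ih => exact hstep.iff_of_siblings ih w

end Siblings

theorem sibling_invariant_general {V : Type*} (R : V → V → Prop)
    (x y : V)
    (hN : ∀ w, R w x ↔ R w y) :
    (∀ v : V, ∀ w : V, localComp R v w x ↔ localComp R v w y) ∧
    (∀ u v : V, u ≠ v → (∀ w, R w u ↔ R w v) →
      ∀ w : V, slideRel R u v w x ↔ slideRel R u v w y) ∧
    (∀ R' : V → V → Prop, Relation.ReflTransGen GStep R R' →
      ∀ w : V, R' w x ↔ R' w y) :=
  ⟨localComp_iff_of_siblings hN,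
    fun u v _ _ => slideRel_iff_of_siblings hN u v,
    fun _ h => iff_of_siblings_of_reflTransGen_gStep h hN⟩

/-- Siblings (vertices with equal in-neighborhoods) remain siblings after
(i) any local complementation and (ii) any legal slide; consequently the
sibling relation is preserved along any finite sequence of local
complementations and slides, i.e. sibling classes are invariant under Bott
equivalence. -/
theorem sibling_invariant {V : Type*} [Fintype V] (R : V → V → Prop)
    (hac : AcyclicRel R) (x y : V) (hxy : x ≠ y)
    (hN : ∀ w, R w x ↔ R w y) :
    (∀ v : V, ∀ w : V, localComp R v w x ↔ localComp R v w y) ∧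
    (∀ u v : V, u ≠ v → (∀ w, R w u ↔ R w v) →
      ∀ w : V, slideRel R u v w x ↔ slideRel R u v w y) ∧
    (∀ R' : V → V → Prop, Relation.ReflTransGen GStep R R' →
      ∀ w : V, R' w x ↔ R' w y) :=
  sibling_invariant_general R x y hN
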